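/- arXiv:1909.05109 — 2 statements merged into one kernel-verified Lean document; each statement's English description precedes it below -/
import Mathlib

section
/- Let (B_k) be a nonnegative process with B_0 ≤ γ a.s. and E[B_{k+1}|F_k] ≤ B_k/α̃ + β̃ a.s. for constants α̃ > 1, 0 ≤ β̃ < 1 with β̃α̃/(α̃−1) ≤ 1. Then P(max_{0≤k≤N} B_k ≥ 1) ≤ 1 − (1−γ)(1−β̃)^N. -/
/-!
Let `Cₙ` be the event that the process has stayed below `1` up to step `n`. The quantity
`∫_{Cₙ} (1 - Bₙ) dμ` shrinks by at most the factor `1 - β` per step: passing from `Cₙ` to `Cₙ₊₁`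
only removes paths on which `1 - Bₙ₊₁ ≤ 0`, and on the `ℱₙ`-measurable event `Cₙ` the drift
condition together with `α⁻¹ ≤ 1 - β` gives `1 - E[Bₙ₊₁ | ℱₙ] ≥ (1 - β)(1 - Bₙ)`. Starting from
`∫ (1 - B₀) ≥ 1 - γ`, this yields `μ(C_N) ≥ ∫_{C_N} (1 - B_N) ≥ (1 - γ)(1 - β)^N`.
-/

open MeasureTheory

section

variable {Ω : Type*} {m0 : MeasurableSpace Ω} {μ : Measure Ω}

theorem setIntegral_le_setIntegral_inter_of_nonpos {s t : Set Ω} {f : Ω → ℝ}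
    (hs : MeasurableSet s) (ht : MeasurableSet t) (hf : IntegrableOn f s μ)
    (hf_nonpos : ∀ ω ∈ s \ t, f ω ≤ 0) :
    ∫ ω in s, f ω ∂μ ≤ ∫ ω in s ∩ t, f ω ∂μ := by
  rw [← integral_inter_add_sdiff ht hf]
  linarith [setIntegral_nonpos (μ := μ) (hs.diff ht) hf_nonpos]

theorem setIntegral_le_of_condExp_le {m : MeasurableSpace Ω} (hm : m ≤ m0)
    {μ : Measure[m0] Ω} [IsFiniteMeasure μ] {f g : Ω → ℝ} (hf : Integrable f μ)
    (hg : Integrable g μ) (hfg : μ[f | m] ≤ᵐ[μ] g) {s : Set Ω} (hs : MeasurableSet[m] s) :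
    ∫ ω in s, f ω ∂μ ≤ ∫ ω in s, g ω ∂μ := by
  rw [← setIntegral_condExp hm hf hs]
  exact setIntegral_mono_ae integrable_condExp.integrableOn hg.integrableOn hfg

def belowOneUntil (B : ℕ → Ω → ℝ) (n : ℕ) : Set Ω := {ω | ∀ k ≤ n, B k ω < 1}

variable {B : ℕ → Ω → ℝ}

theorem belowOneUntil_zero : belowOneUntil B 0 = {ω | B 0 ω < 1} := by
  simp [belowOneUntil]

theorem belowOneUntil_succ (n : ℕ) :
    belowOneUntil B (n + 1) = belowOneUntil B n ∩ {ω | B (n + 1) ω < 1} := by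
  ext ω
  simp only [belowOneUntil, Set.mem_ofPred_eq, Set.mem_inter_iff, Nat.le_succ_iff]
  grind

theorem compl_belowOneUntil (n : ℕ) :
    (belowOneUntil B n)ᶜ = {ω | ∃ k ≤ n, 1 ≤ B k ω} := by
  ext ω
  simp [belowOneUntil]

theorem measurableSet_belowOneUntil {ℱ : Filtration ℕ m0} (hB : Adapted ℱ B) (n : ℕ) :
    MeasurableSet[ℱ n] (belowOneUntil B n) := by
  simp only [belowOneUntil, Set.ofPred_forall]
  exact MeasurableSet.iInter fun k => MeasurableSet.iInter fun hk =>
    ℱ.mono hk _ (hB k measurableSet_Iio)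

theorem one_sub_mul_one_sub_le {α β b : ℝ} (hb : 0 ≤ b) (hαβ : α⁻¹ + β ≤ 1) :
    (1 - β) * (1 - b) ≤ 1 - (b / α + β) := by
  rw [div_eq_mul_inv]
  nlinarith

variable {ℱ : Filtration ℕ m0} {α β : ℝ}

theorem setIntegral_one_sub_belowOneUntil_succ_ge [IsFiniteMeasure μ] (hadp : Adapted ℱ B)
    (hint : ∀ k, Integrable (B k) μ) (hnn : ∀ k ω, 0 ≤ B k ω)
    (hαβ : α⁻¹ + β ≤ 1) (hdrift : ∀ k, μ[B (k + 1) | ℱ k] ≤ᵐ[μ] fun ω => B k ω / α + β)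
    (n : ℕ) :
    (1 - β) * ∫ ω in belowOneUntil B n, (1 - B n ω) ∂μ ≤
      ∫ ω in belowOneUntil B (n + 1), (1 - B (n + 1) ω) ∂μ := by
  set s := belowOneUntil B n
  have hs : MeasurableSet[ℱ n] s := measurableSet_belowOneUntil hadp n
  have hdriftInt : Integrable (fun ω => B n ω / α + β) μ :=
    ((hint n).div_const α).add (integrable_const β)
  have hdrift_pointwise : ∫ ω in s, (1 - β) * (1 - B n ω) ∂μ ≤
      ∫ ω in s, (1 - (B n ω / α + β)) ∂μ :=
    setIntegral_mono (((integrable_const 1).sub (hint n)).const_mul _).integrableOn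
      ((integrable_const 1).sub hdriftInt).integrableOn
      fun ω => one_sub_mul_one_sub_le (hnn n ω) hαβ
  have hcondExp : ∫ ω in s, B (n + 1) ω ∂μ ≤ ∫ ω in s, (B n ω / α + β) ∂μ :=
    setIntegral_le_of_condExp_le (ℱ.le n) (hint (n + 1)) hdriftInt (hdrift n) hs
  have hexit : ∫ ω in s, (1 - B (n + 1) ω) ∂μ ≤
      ∫ ω in belowOneUntil B (n + 1), (1 - B (n + 1) ω) ∂μ := by
    rw [belowOneUntil_succ]
    refine setIntegral_le_setIntegral_inter_of_nonpos (ℱ.le n _ hs)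
      (ℱ.le (n + 1) _ (hadp (n + 1) measurableSet_Iio))
      ((integrable_const 1).sub (hint (n + 1))).integrableOn fun ω hω => ?_
    simpa using hω.2
  rw [← integral_const_mul]
  rw [integral_sub (integrable_const 1).integrableOn hdriftInt.integrableOn] at hdrift_pointwise
  rw [integral_sub (integrable_const 1).integrableOn (hint (n + 1)).integrableOn] at hexit
  linarith

theorem le_setIntegral_one_sub_belowOneUntil [IsProbabilityMeasure μ] {γ : ℝ} (hadp : Adapted ℱ B)
    (hint : ∀ k, Integrable (B k) μ) (hnn : ∀ k ω, 0 ≤ B k ω) (hα : 0 < α)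
    (hαβ : α⁻¹ + β ≤ 1) (h0 : ∀ᵐ ω ∂μ, B 0 ω ≤ γ)
    (hdrift : ∀ k, μ[B (k + 1) | ℱ k] ≤ᵐ[μ] fun ω => B k ω / α + β) (n : ℕ) :
    (1 - γ) * (1 - β) ^ n ≤ ∫ ω in belowOneUntil B n, (1 - B n ω) ∂μ := by
  induction n with
  | zero =>
    have hstart : 1 - γ ≤ ∫ ω, (1 - B 0 ω) ∂μ := by
      rw [integral_sub (integrable_const 1) (hint 0), integral_const, probReal_univ, one_smul]
      have hmean : ∫ ω, B 0 ω ∂μ ≤ γ := by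
        simpa using integral_mono_ae (hint 0) (integrable_const γ) h0
      linarith
    have hexit : ∫ ω, (1 - B 0 ω) ∂μ ≤ ∫ ω in belowOneUntil B 0, (1 - B 0 ω) ∂μ := by
      rw [belowOneUntil_zero, ← Set.univ_inter {ω | B 0 ω < 1}, ← setIntegral_univ]
      refine setIntegral_le_setIntegral_inter_of_nonpos MeasurableSet.univ
        (ℱ.le 0 _ (hadp 0 measurableSet_Iio))
        ((integrable_const 1).sub (hint 0)).integrableOn fun ω hω => ?_
      simpa using hω.2
    simpa using hstart.trans hexit
  | succ n ih =>
    have hβ : 0 ≤ 1 - β := by linarith [inv_pos.2 hα]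
    calc (1 - γ) * (1 - β) ^ (n + 1) = (1 - β) * ((1 - γ) * (1 - β) ^ n) := by ring
      _ ≤ (1 - β) * ∫ ω in belowOneUntil B n, (1 - B n ω) ∂μ := by gcongr
      _ ≤ _ := setIntegral_one_sub_belowOneUntil_succ_ge hadp hint hnn hαβ hdrift n

end

theorem inv_add_le_one_of_mul_div_sub_one_le {α β : ℝ} (hα : 1 < α) (h : β * α / (α - 1) ≤ 1) :
    α⁻¹ + β ≤ 1 := by
  have hα0 : 0 < α := by linarith
  rw [div_le_one (by linarith)] at h
  refine le_of_mul_le_mul_right ?_ hα0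
  rw [add_mul, inv_mul_cancel₀ hα0.ne']
  linarith

theorem kushner_discrete_bound_case1_general
    {Ω : Type*} {m0 : MeasurableSpace Ω} (μ : Measure Ω) [IsProbabilityMeasure μ]
    (ℱ : Filtration ℕ m0) (B : ℕ → Ω → ℝ)
    (hadp : Adapted ℱ B) (hint : ∀ k, Integrable (B k) μ)
    (hnn : ∀ k ω, 0 ≤ B k ω)
    (γ α β : ℝ)
    (hα : 1 < α)
    (hcase : β * α / (α - 1) ≤ 1)
    (h0 : ∀ᵐ ω ∂μ, B 0 ω ≤ γ)
    (hdrift : ∀ k, μ[B (k + 1) | ℱ k] ≤ᵐ[μ] fun ω => B k ω / α + β)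
    (N : ℕ) :
    μ {ω | ∃ k ≤ N, 1 ≤ B k ω} ≤ ENNReal.ofReal (1 - (1 - γ) * (1 - β) ^ N) := by
  have hC : MeasurableSet (belowOneUntil B N) := ℱ.le N _ (measurableSet_belowOneUntil hadp N)
  have hlower := le_setIntegral_one_sub_belowOneUntil hadp hint hnn (by linarith)
    (inv_add_le_one_of_mul_div_sub_one_le hα hcase) h0 hdrift N
  have hupper : ∫ ω in belowOneUntil B N, (1 - B N ω) ∂μ ≤ μ.real (belowOneUntil B N) := by
    simpa using setIntegral_mono_on ((integrable_const 1).sub (hint N)).integrableOn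
      (integrable_const (1 : ℝ)).integrableOn hC fun ω _ => sub_le_self 1 (hnn N ω)
  rw [← compl_belowOneUntil, ← ofReal_measureReal, probReal_compl_eq_one_sub hC]
  exact ENNReal.ofReal_le_ofReal (by linarith)

/-- Kushner-type discrete-time bound, case `βα/(α-1) ≤ 1`. -/
theorem kushner_discrete_bound_case1
    {Ω : Type*} {m0 : MeasurableSpace Ω} (μ : Measure Ω) [IsProbabilityMeasure μ]
    (ℱ : Filtration ℕ m0) (B : ℕ → Ω → ℝ)
    (hadp : Adapted ℱ B) (hint : ∀ k, Integrable (B k) μ)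
    (hnn : ∀ k ω, 0 ≤ B k ω)
    (γ α β : ℝ) (hγ0 : 0 ≤ γ) (hγ1 : γ < 1)
    (hα : 1 < α) (hβ0 : 0 ≤ β) (hβ1 : β < 1)
    (hcase : β * α / (α - 1) ≤ 1)
    (h0 : ∀ᵐ ω ∂μ, B 0 ω ≤ γ)
    (hdrift : ∀ k, μ[B (k + 1) | ℱ k] ≤ᵐ[μ] fun ω => B k ω / α + β)
    (N : ℕ) :
    μ {ω | ∃ k ≤ N, 1 ≤ B k ω} ≤ ENNReal.ofReal (1 - (1 - γ) * (1 - β) ^ N) :=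
  kushner_discrete_bound_case1_general μ ℱ B hadp hint hnn γ α β hα hcase h0 hdrift N
end

section
/- Let (B_k) be a nonnegative process with B_0 ≤ γ a.s. and E[B_{k+1}|F_k] ≤ B_k/α̃ + β̃ a.s., where α̃ > 1, 0 ≤ β̃ < 1, and β̃α̃/(α̃−1) > 1. Then P(max_{0≤k≤N} B_k ≥ 1) ≤ γ·α̃^{−N} + (1 − α̃^{−N})·α̃β̃/(α̃−1). -/
/-!
Freeze the process at the value `1` as soon as it reaches level `1`: `M k = 1` on the event
`A k` that `B j ≥ 1` for some `j ≤ k`, and `M k = B k` elsewhere. The hypothesis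
`β α / (α - 1) > 1` says exactly `1 ≤ 1 / α + β`, so the frozen value obeys the drift bound as
well and `E[M (k+1) | ℱ k] ≤ M k / α + β`. Taking expectations and iterating bounds `E[M N]`,
and `M N ≥ 1` on `A N` with `M N ≥ 0` turns this into the bound on `P(A N)`.
-/

open MeasureTheory

-- `α β / (α - 1)` is the fixed point of `x ↦ x / α + β`; the deviation from it decays like `α⁻ⁿ`.
theorem le_geom_of_succ_le_div_add {x : ℕ → ℝ} {α β γ : ℝ} (hα : 0 < α) (hα1 : α ≠ 1)
    (h0 : x 0 ≤ γ) (hsucc : ∀ k, x (k + 1) ≤ x k / α + β) (n : ℕ) :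
    x n ≤ γ * (1 / α) ^ n + (1 - (1 / α) ^ n) * α * β / (α - 1) := by
  have hα1' : α - 1 ≠ 0 := sub_ne_zero.mpr hα1
  induction n with
  | zero => simpa using h0
  | succ n ih =>
    calc x (n + 1) ≤ x n / α + β := hsucc n
      _ ≤ (γ * (1 / α) ^ n + (1 - (1 / α) ^ n) * α * β / (α - 1)) / α + β := by gcongr
      _ = _ := by rw [one_div, inv_pow, inv_pow, pow_succ]; field_simp; ring

section

variable {Ω : Type*} {m0 : MeasurableSpace Ω} {μ : Measure Ω}

theorem condExp_piecewise {E : Type*} [NormedAddCommGroup E] [NormedSpace ℝ E] [CompleteSpace E]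
    {m : MeasurableSpace Ω} (hm : m ≤ m0) {f g : Ω → E} {s : Set Ω} [DecidablePred (· ∈ s)]
    (hf : Integrable f μ) (hg : Integrable g μ) (hs : MeasurableSet[m] s) :
    μ[s.piecewise f g | m] =ᵐ[μ] s.piecewise (μ[f | m]) (μ[g | m]) := by
  rw [← Set.indicator_add_compl_eq_piecewise, ← Set.indicator_add_compl_eq_piecewise]
  filter_upwards [condExp_add (hf.indicator (hm _ hs)) (hg.indicator (hm _ hs.compl)) m,
    condExp_indicator hf hs, condExp_indicator hg hs.compl] with ω hsum hfs hgs
  simp only [hsum, Pi.add_apply, hfs, hgs]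

theorem integral_le_div_add_of_condExp_le [IsProbabilityMeasure μ] {m : MeasurableSpace Ω}
    (hm : m ≤ m0) {X Y : Ω → ℝ} {α β : ℝ} (hX : Integrable X μ)
    (hY : μ[Y | m] ≤ᵐ[μ] fun ω => X ω / α + β) :
    ∫ ω, Y ω ∂μ ≤ (∫ ω, X ω ∂μ) / α + β := by
  calc ∫ ω, Y ω ∂μ = ∫ ω, μ[Y | m] ω ∂μ := (integral_condExp hm).symm
    _ ≤ ∫ ω, X ω / α + β ∂μ :=
        integral_mono_ae integrable_condExp ((hX.div_const α).add (integrable_const β)) hY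
    _ = (∫ ω, X ω ∂μ) / α + β := by
        rw [integral_add (hX.div_const α) (integrable_const β), integral_div]; simp

def reachedOne (B : ℕ → Ω → ℝ) (k : ℕ) : Set Ω := {ω | ∃ j ≤ k, 1 ≤ B j ω}

theorem reachedOne_eq_biUnion (B : ℕ → Ω → ℝ) (k : ℕ) :
    reachedOne B k = ⋃ j ∈ Set.Iic k, {ω | 1 ≤ B j ω} := by
  ext; simp [reachedOne]

theorem measurableSet_reachedOne {ℱ : Filtration ℕ m0} {B : ℕ → Ω → ℝ} (hB : Adapted ℱ B)
    (k : ℕ) : MeasurableSet[ℱ k] (reachedOne B k) := by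
  rw [reachedOne_eq_biUnion]
  exact .biUnion (Set.to_countable _) fun j hj =>
    ℱ.mono hj _ (measurableSet_le measurable_const (hB j))

theorem reachedOne_mono (B : ℕ → Ω → ℝ) : Monotone (reachedOne B) :=
  fun _ _ hkl _ ⟨j, hj, hB⟩ => ⟨j, hj.trans hkl, hB⟩

theorem one_le_of_mem_reachedOne_succ {B : ℕ → Ω → ℝ} {k : ℕ} {ω : Ω}
    (hk1 : ω ∈ reachedOne B (k + 1)) (hk : ω ∉ reachedOne B k) : 1 ≤ B (k + 1) ω := by
  obtain ⟨j, hj, hB⟩ := hk1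
  obtain rfl : j = k + 1 := by
    by_contra hne
    exact hk ⟨j, by omega, hB⟩
  exact hB

open Classical in
noncomputable def freezeAtOne (B : ℕ → Ω → ℝ) (k : ℕ) : Ω → ℝ :=
  (reachedOne B k).piecewise (fun _ => 1) (B k)

theorem freezeAtOne_of_mem {B : ℕ → Ω → ℝ} {k : ℕ} {ω : Ω} (h : ω ∈ reachedOne B k) :
    freezeAtOne B k ω = 1 := by
  classical exact Set.piecewise_eq_of_mem _ _ _ h

theorem freezeAtOne_of_notMem {B : ℕ → Ω → ℝ} {k : ℕ} {ω : Ω} (h : ω ∉ reachedOne B k) :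
    freezeAtOne B k ω = B k ω := by
  classical exact Set.piecewise_eq_of_notMem _ _ _ h

theorem freezeAtOne_zero_le (B : ℕ → Ω → ℝ) : freezeAtOne B 0 ≤ B 0 := by
  intro ω
  by_cases h : ω ∈ reachedOne B 0
  · rw [freezeAtOne_of_mem h]
    obtain ⟨j, hj, hB⟩ := h
    rwa [Nat.le_zero.mp hj] at hB
  · rw [freezeAtOne_of_notMem h]

open Classical in
theorem freezeAtOne_succ_le (B : ℕ → Ω → ℝ) (k : ℕ) :
    freezeAtOne B (k + 1) ≤ (reachedOne B k).piecewise (fun _ => 1) (B (k + 1)) := by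
  intro ω
  by_cases hk : ω ∈ reachedOne B k
  · rw [freezeAtOne_of_mem (reachedOne_mono B k.le_succ hk), Set.piecewise_eq_of_mem _ _ _ hk]
  rw [Set.piecewise_eq_of_notMem _ _ _ hk]
  by_cases hk1 : ω ∈ reachedOne B (k + 1)
  · rw [freezeAtOne_of_mem hk1]
    exact one_le_of_mem_reachedOne_succ hk1 hk
  · rw [freezeAtOne_of_notMem hk1]

theorem integrable_freezeAtOne [IsFiniteMeasure μ] {B : ℕ → Ω → ℝ} {k : ℕ}
    (hB : Integrable (B k) μ) (hs : MeasurableSet (reachedOne B k)) :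
    Integrable (freezeAtOne B k) μ := by
  classical exact Integrable.piecewise hs (integrable_const (1 : ℝ)).integrableOn hB.integrableOn

theorem indicator_reachedOne_le_freezeAtOne {B : ℕ → Ω → ℝ} {k : ℕ} (hB : 0 ≤ B k) :
    (reachedOne B k).indicator 1 ≤ freezeAtOne B k := by
  intro ω
  by_cases h : ω ∈ reachedOne B k
  · rw [freezeAtOne_of_mem h, Set.indicator_of_mem h, Pi.one_apply]
  · rw [freezeAtOne_of_notMem h, Set.indicator_of_notMem h]
    exact hB ω

theorem measure_reachedOne_le_integral_freezeAtOne [IsFiniteMeasure μ] {B : ℕ → Ω → ℝ} {k : ℕ}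
    (hB : Integrable (B k) μ) (hnn : 0 ≤ B k) (hs : MeasurableSet (reachedOne B k)) :
    μ (reachedOne B k) ≤ ENNReal.ofReal (∫ ω, freezeAtOne B k ω ∂μ) := by
  rw [← ofReal_measureReal, ← integral_indicator_one hs]
  exact ENNReal.ofReal_le_ofReal <| integral_mono ((integrable_const 1).indicator hs)
    (integrable_freezeAtOne hB hs) (indicator_reachedOne_le_freezeAtOne hnn)

open Classical in
theorem condExp_freezeAtOne_succ_le [IsFiniteMeasure μ] {ℱ : Filtration ℕ m0}
    {B : ℕ → Ω → ℝ} (hB : Adapted ℱ B) {k : ℕ} (hint : Integrable (B (k + 1)) μ) {α β : ℝ}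
    (hαβ : 1 ≤ 1 / α + β) (hdrift : μ[B (k + 1) | ℱ k] ≤ᵐ[μ] fun ω => B k ω / α + β) :
    μ[freezeAtOne B (k + 1) | ℱ k] ≤ᵐ[μ] fun ω => freezeAtOne B k ω / α + β := by
  have hs := measurableSet_reachedOne hB k
  have hle := condExp_mono (m := ℱ k)
    (integrable_freezeAtOne hint (ℱ.le _ _ (measurableSet_reachedOne hB (k + 1))))
    (Integrable.piecewise (ℱ.le _ _ hs) (integrable_const (1 : ℝ)).integrableOn hint.integrableOn)
    (ae_of_all _ (freezeAtOne_succ_le B k))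
  filter_upwards [hle, condExp_piecewise (ℱ.le k) (integrable_const 1) hint hs, hdrift]
    with ω hle hpiece hstep
  rw [hpiece, condExp_const (ℱ.le k)] at hle
  by_cases h : ω ∈ reachedOne B k
  · rw [Set.piecewise_eq_of_mem _ _ _ h] at hle
    rw [freezeAtOne_of_mem h]
    linarith
  · rw [Set.piecewise_eq_of_notMem _ _ _ h] at hle
    rw [freezeAtOne_of_notMem h]
    linarith

end

theorem kushner_discrete_bound_case2_general
    {Ω : Type*} {m0 : MeasurableSpace Ω} (μ : Measure Ω) [IsProbabilityMeasure μ]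
    (ℱ : Filtration ℕ m0) (B : ℕ → Ω → ℝ)
    (hadp : Adapted ℱ B) (hint : ∀ k, Integrable (B k) μ)
    (hnn : ∀ k ω, 0 ≤ B k ω)
    (γ α β : ℝ)
    (hα : 1 < α)
    (hcase : 1 < β * α / (α - 1))
    (h0 : ∀ᵐ ω ∂μ, B 0 ω ≤ γ)
    (hdrift : ∀ k, μ[B (k + 1) | ℱ k] ≤ᵐ[μ] fun ω => B k ω / α + β)
    (N : ℕ) :
    μ {ω | ∃ k ≤ N, 1 ≤ B k ω}
      ≤ ENNReal.ofReal (γ * (1 / α) ^ N + (1 - (1 / α) ^ N) * α * β / (α - 1)) := by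
  have hαβ : 1 ≤ 1 / α + β := by
    rw [lt_div_iff₀ (by linarith)] at hcase
    rw [div_add' _ _ _ (by positivity), le_div_iff₀ (by positivity)]
    linarith
  have hs k : MeasurableSet (reachedOne B k) := ℱ.le k _ (measurableSet_reachedOne hadp k)
  have hM k := integrable_freezeAtOne (hint k) (hs k)
  have hstart : ∫ ω, freezeAtOne B 0 ω ∂μ ≤ γ := by
    calc ∫ ω, freezeAtOne B 0 ω ∂μ ≤ ∫ _, γ ∂μ :=
          integral_mono_ae (hM 0) (integrable_const γ)
            (h0.mono fun ω h => (freezeAtOne_zero_le B ω).trans h)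
      _ = γ := by simp
  have hstep k : ∫ ω, freezeAtOne B (k + 1) ω ∂μ ≤ (∫ ω, freezeAtOne B k ω ∂μ) / α + β :=
    integral_le_div_add_of_condExp_le (ℱ.le k) (hM k)
      (condExp_freezeAtOne_succ_le hadp (hint (k + 1)) hαβ (hdrift k))
  calc μ (reachedOne B N) ≤ ENNReal.ofReal (∫ ω, freezeAtOne B N ω ∂μ) :=
        measure_reachedOne_le_integral_freezeAtOne (hint N) (hnn N) (hs N)
    _ ≤ _ := ENNReal.ofReal_le_ofReal
        (le_geom_of_succ_le_div_add (x := fun k => ∫ ω, freezeAtOne B k ω ∂μ)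
          (by linarith) hα.ne' hstart hstep N)

/-- Kushner-type discrete-time bound, case `βα/(α-1) > 1`. -/
theorem kushner_discrete_bound_case2
    {Ω : Type*} {m0 : MeasurableSpace Ω} (μ : Measure Ω) [IsProbabilityMeasure μ]
    (ℱ : Filtration ℕ m0) (B : ℕ → Ω → ℝ)
    (hadp : Adapted ℱ B) (hint : ∀ k, Integrable (B k) μ)
    (hnn : ∀ k ω, 0 ≤ B k ω)
    (γ α β : ℝ) (hγ0 : 0 ≤ γ) (hγ1 : γ < 1)
    (hα : 1 < α) (hβ0 : 0 ≤ β) (hβ1 : β < 1)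
    (hcase : 1 < β * α / (α - 1))
    (h0 : ∀ᵐ ω ∂μ, B 0 ω ≤ γ)
    (hdrift : ∀ k, μ[B (k + 1) | ℱ k] ≤ᵐ[μ] fun ω => B k ω / α + β)
    (N : ℕ) :
    μ {ω | ∃ k ≤ N, 1 ≤ B k ω}
      ≤ ENNReal.ofReal (γ * (1 / α) ^ N + (1 - (1 / α) ^ N) * α * β / (α - 1)) :=
  kushner_discrete_bound_case2_general μ ℱ B hadp hint hnn γ α β hα hcase h0 hdrift N
end
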